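/- arXiv:1911.08959 — 4 statements merged into one kernel-verified Lean document; each statement's English description precedes it below -/
import Mathlib

section
/- (Geometric charging bound) Let m ≥ 1, and for i = 1,...,m let P_i > 0, L_i > 0 be reals, set R_i = ∑_{j=i}^m P_j, and φ_i = R_i L_i / P_i. Let α ≥ 1, and suppose a nondecreasing function F : ℝ≥0 → ℝ≥0 (interpreting F(τ) as the probability mass an optimal search can cover within length τ) satisfies, for every i, F(φ_i/(2α)) ≤ R_1 − R_i + R_i/2, i.e., at time φ_i/(2α) at least R_i/2 probability mass remains unsearched by the optimum. If the optimal cost is c* = ∫_0^∞ (1 − F(τ)) dτ (equivalently, the area of the staircase diagram), then ∑_{i=1}^m P_i φ_i ≤ 4α c*. -/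
/-!
Shrink the greedy diagram, whose columns have width `P i` and height `φ i`, by `2α` vertically:
the resulting staircase `τ ↦ ∑_{τ ≤ φ i / (2α)} P i` has area `∑ P i φ i / (2α)`. At height `τ`
its width is at most `R i₀`, where `i₀` is the first column still reaching `τ`, while the optimum
has covered at most `1 - R i₀ / 2` of the mass by time `φ i₀ / (2α) ≥ τ`. Hence the staircase lies
below `2 (1 - F)`, whose area is `2 c*`.
-/

open Finset MeasureTheory Set

lemma setIntegral_Ioi_zero_indicator_Iic (c t : ℝ) :
    ∫ τ in Ioi 0, (Iic t).indicator (fun _ => c) τ = max t 0 * c := by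
  rw [setIntegral_indicator measurableSet_Iic, Ioi_inter_Iic, setIntegral_const, smul_eq_mul,
    Real.volume_real_Ioc, sub_zero]

lemma integrableOn_Ioi_zero_indicator_Iic (c t : ℝ) :
    IntegrableOn ((Iic t).indicator fun _ => c) (Ioi 0) := by
  rw [IntegrableOn, integrable_indicator_iff measurableSet_Iic, IntegrableOn,
    Measure.restrict_restrict measurableSet_Iic, Iic_inter_Ioi]
  exact integrableOn_const measure_Ioc_lt_top.ne

section Staircase

variable {ι : Type*} [Fintype ι] (c t : ι → ℝ)

lemma sum_filter_le_eq_sum_indicator_Iic (τ : ℝ) :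
    ∑ i ∈ univ.filter (τ ≤ t ·), c i = ∑ i, (Iic (t i)).indicator (fun _ => c i) τ := by
  simp only [sum_filter, indicator_apply, Set.mem_Iic]

lemma integrableOn_Ioi_zero_sum_filter_le :
    IntegrableOn (fun τ => ∑ i ∈ univ.filter (τ ≤ t ·), c i) (Ioi 0) := by
  simp only [sum_filter_le_eq_sum_indicator_Iic]
  exact integrable_finsetSum _ fun i _ => integrableOn_Ioi_zero_indicator_Iic (c i) (t i)

lemma sum_mul_le_setIntegral_Ioi_zero_sum_filter_le (hc : ∀ i, 0 ≤ c i) :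
    ∑ i, c i * t i ≤ ∫ τ in Ioi 0, ∑ i ∈ univ.filter (τ ≤ t ·), c i := by
  simp only [sum_filter_le_eq_sum_indicator_Iic]
  rw [integral_finsetSum _ fun i _ => integrableOn_Ioi_zero_indicator_Iic (c i) (t i)]
  gcongr with i
  rw [setIntegral_Ioi_zero_indicator_Iic, mul_comm]
  exact mul_le_mul_of_nonneg_right (le_max_left _ _) (hc i)

end Staircase

lemma sum_filter_le_le_two_mul_one_sub {ι : Type*} [Fintype ι] [LinearOrder ι] (P t : ι → ℝ)
    (hP : ∀ i, 0 ≤ P i) (F : ℝ → ℝ) (hF : Monotone F) (hF1 : ∀ τ, F τ ≤ 1)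
    (hFt : ∀ i, F (t i) ≤ 1 - (∑ j ∈ univ.filter (i ≤ ·), P j) / 2) (τ : ℝ) :
    ∑ i ∈ univ.filter (τ ≤ t ·), P i ≤ 2 * (1 - F τ) := by
  rcases (univ.filter (τ ≤ t ·)).eq_empty_or_nonempty with hempty | hne
  · simp only [hempty, sum_empty]
    linarith [hF1 τ]
  set i₀ := min' _ hne
  have hτ : τ ≤ t i₀ := (mem_filter.mp (min'_mem _ hne)).2
  have hsub : univ.filter (τ ≤ t ·) ⊆ univ.filter (i₀ ≤ ·) := fun i hi =>
    mem_filter.mpr ⟨mem_univ i, min'_le _ i hi⟩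
  calc ∑ i ∈ univ.filter (τ ≤ t ·), P i
      ≤ ∑ j ∈ univ.filter (i₀ ≤ ·), P j := sum_le_sum_of_subset_of_nonneg hsub fun j _ _ => hP j
    _ ≤ 2 * (1 - F (t i₀)) := by linarith [hFt i₀]
    _ ≤ 2 * (1 - F τ) := by linarith [hF hτ]

open Finset MeasureTheory in
theorem stmt_5_general (m : ℕ) (hm : 1 ≤ m) (P R φ : Fin m → ℝ)
    (hP : ∀ i, 0 < P i)
    (hR : ∀ i, R i = ∑ j ∈ univ.filter (fun j => i ≤ j), P j)
    (hRtot : ∑ j, P j = 1)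
    (α : ℝ) (hα : 1 ≤ α)
    (F : ℝ → ℝ) (hFmono : Monotone F) (hF1 : ∀ τ, F τ ≤ 1)
    (hFint : IntegrableOn (fun τ => 1 - F τ) (Set.Ioi (0 : ℝ)))
    (hFbound : ∀ i, F (φ i / (2 * α)) ≤ R ⟨0, hm⟩ - R i + R i / 2)
    (cstar : ℝ) (hcstar : cstar = ∫ τ in Set.Ioi (0 : ℝ), (1 - F τ)) :
    ∑ i, P i * φ i ≤ 4 * α * cstar := by
  set t := fun i => φ i / (2 * α)
  have hα2 : (0 : ℝ) < 2 * α := by linarith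
  have hR0 : R ⟨0, hm⟩ = 1 := by
    rw [hR, ← hRtot]
    congr 1
    ext j
    simp [Fin.le_def]
  have hFt (i : Fin m) : F (t i) ≤ 1 - (∑ j ∈ univ.filter (i ≤ ·), P j) / 2 := by
    have := hFbound i
    rw [hR0, hR i] at this
    linarith
  calc ∑ i, P i * φ i = 2 * α * ∑ i, P i * t i := by
        rw [mul_sum]
        exact sum_congr rfl fun i _ => by simp only [t]; field_simp
    _ ≤ 2 * α * ∫ τ in Ioi 0, ∑ i ∈ univ.filter (τ ≤ t ·), P i := by
        gcongr
        exact sum_mul_le_setIntegral_Ioi_zero_sum_filter_le P t fun i => (hP i).le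
    _ ≤ 2 * α * ∫ τ in Ioi 0, 2 * (1 - F τ) := by
        refine mul_le_mul_of_nonneg_left ?_ hα2.le
        exact setIntegral_mono_on (integrableOn_Ioi_zero_sum_filter_le P t) (hFint.const_mul 2)
          measurableSet_Ioi fun τ _ =>
            sum_filter_le_le_two_mul_one_sub P t (fun i => (hP i).le) F hFmono hF1 hFt τ
    _ = 4 * α * cstar := by
        rw [integral_const_mul, hcstar]
        ring

open Finset MeasureTheory in
/-- Geometric charging bound: if at time `φ i / (2α)` at least `R i / 2` of the
probability mass remains unsearched by the optimum, then
`∑ i, P i * φ i ≤ 4 α c*` where `c* = ∫_0^∞ (1 - F)`. -/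
theorem stmt_5 (m : ℕ) (hm : 1 ≤ m) (P L R φ : Fin m → ℝ)
    (hP : ∀ i, 0 < P i) (hL : ∀ i, 0 < L i)
    (hR : ∀ i, R i = ∑ j ∈ univ.filter (fun j => i ≤ j), P j)
    (hRtot : ∑ j, P j = 1)
    (hφ : ∀ i, φ i = R i * L i / P i)
    (α : ℝ) (hα : 1 ≤ α)
    (F : ℝ → ℝ) (hFmono : Monotone F) (hF0 : ∀ τ, 0 ≤ F τ) (hF1 : ∀ τ, F τ ≤ 1)
    (hFint : IntegrableOn (fun τ => 1 - F τ) (Set.Ioi (0 : ℝ)))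
    (hFbound : ∀ i, F (φ i / (2 * α)) ≤ R ⟨0, hm⟩ - R i + R i / 2)
    (cstar : ℝ) (hcstar : cstar = ∫ τ in Set.Ioi (0 : ℝ), (1 - F τ)) :
    ∑ i, P i * φ i ≤ 4 * α * cstar :=
  stmt_5_general m hm P R φ hP hR hRtot α hα F hFmono hF1 hFint hFbound cstar hcstar
end

section
/- On the same cycle instance, the clockwise search that visits vertices in order n, n−1, ..., 1 has cost equal to ∑_{i=1}^n ∑_{j=i}^n j/n = (n+1)(2n+1)/6. Consequently, the ratio of the clockwise cost to the counterclockwise cost, ((n+1)(2n+1)/6) / ((3n−1)/2), tends to infinity as n → ∞; in particular it is at least n/9 for all n ≥ 1. -/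
open Finset Filter in
lemma sumsq_aux (n : ℕ) : (∑ j ∈ Icc 1 n, (j : ℝ) ^ 2)
    = (n : ℝ) * ((n : ℝ) + 1) * (2 * (n : ℝ) + 1) / 6 := by
  induction n with
  | zero => simp
  | succ n ih =>
    rw [Finset.sum_Icc_succ_top (by omega : 1 ≤ n + 1), ih]
    push_cast
    ring

open Finset Filter in
lemma ratio_aux (n : ℕ) (hn : 1 ≤ n) :
    (n : ℝ) / 9
      ≤ (((n : ℝ) + 1) * (2 * (n : ℝ) + 1) / 6) / ((3 * (n : ℝ) - 1) / 2) := by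
  have h1 : (1 : ℝ) ≤ (n : ℝ) := by exact_mod_cast hn
  rw [div_le_div_iff₀ (by norm_num) (by linarith)]
  nlinarith

open Finset Filter in
/-- Clockwise cost identity `∑_{i=1}^n ∑_{j=i}^n j/n = (n+1)(2n+1)/6`, and the
ratio of clockwise to counterclockwise cost tends to infinity; in particular it
is at least `n/9` for all `n ≥ 1`. -/
theorem stmt_10 :
    (∀ n : ℕ, 1 ≤ n →
      (∑ i ∈ Icc 1 n, ∑ j ∈ Icc i n, (j : ℝ) / (n : ℝ))
        = ((n : ℝ) + 1) * (2 * (n : ℝ) + 1) / 6)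
    ∧ Tendsto (fun n : ℕ =>
        (((n : ℝ) + 1) * (2 * (n : ℝ) + 1) / 6) / ((3 * (n : ℝ) - 1) / 2))
        atTop atTop
    ∧ (∀ n : ℕ, 1 ≤ n →
        (n : ℝ) / 9
          ≤ (((n : ℝ) + 1) * (2 * (n : ℝ) + 1) / 6) / ((3 * (n : ℝ) - 1) / 2)) := by
  refine ⟨?_, ?_, fun n hn => ratio_aux n hn⟩
  · intro n hn
    have hn0 : (n : ℝ) ≠ 0 := by positivity
    rw [Finset.sum_comm' (t' := Icc 1 n) (s' := fun j => Icc 1 j)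
      (by intro i j; simp only [Finset.mem_Icc]; omega)]
    have : ∀ j ∈ Icc 1 n, (∑ _i ∈ Icc 1 j, (j : ℝ) / (n : ℝ))
        = (j : ℝ) ^ 2 / (n : ℝ) := by
      intro j hj
      rw [Finset.sum_const, Nat.card_Icc]
      simp only [Nat.add_sub_cancel, nsmul_eq_mul]
      ring
    rw [Finset.sum_congr rfl this, ← Finset.sum_div, sumsq_aux]
    field_simp
  · apply Filter.tendsto_atTop_mono' _ (Filter.eventually_atTop.2 ⟨1, fun n hn => ratio_aux n hn⟩)
    have : Filter.Tendsto (fun n : ℕ => (n : ℝ)) Filter.atTop Filter.atTop :=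
      tendsto_natCast_atTop_atTop
    exact this.atTop_div_const (by norm_num)
end

section
/- (Validity of cut inequalities) Let a feasible expanding search on a rooted graph be encoded by y_{ij} ∈ [0,1] for each arc (i,j), where y_{ij} equals the probability the searcher travels arc (i,j), and z_k equals the probability the search reaches vertex k. Then for every vertex k ≠ r and every vertex set S containing r but not k, the total y-value on arcs leaving S is at least z_k: ∑_{(i,j): i∈S, j∉S} y_{ij} ≥ z_k. -/
open Finset in
/-- Validity of cut inequalities (C1): for a search encoded by a spanning
arborescence with parent map `par`, `y i j = z j` on the unique tree arc into
`j` and `0` otherwise, and `z` non-increasing along tree paths from the root,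
every cut separating `r` from `k` carries `y`-value at least `z k`. -/
theorem stmt_14 {V : Type*} [Fintype V] [DecidableEq V]
    (r : V) (par : V → V) (hreach : ∀ v : V, ∃ n : ℕ, par^[n] v = r)
    (z : V → ℝ) (hz0 : ∀ v, 0 ≤ z v) (hmono : ∀ v, v ≠ r → z v ≤ z (par v))
    (y : V → V → ℝ)
    (hy : ∀ i j, y i j = if j ≠ r ∧ i = par j then z j else 0)
    (k : V) (hk : k ≠ r) (S : Finset V) (hrS : r ∈ S) (hkS : k ∉ S) :
    z k ≤ ∑ i ∈ S, ∑ j ∈ Sᶜ, y i j := by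
  have hyn : ∀ i j, 0 ≤ y i j := by
    intro i j
    rw [hy]
    split
    · exact hz0 j
    · exact le_refl 0
  have hex : ∃ n : ℕ, par^[n] k ∈ S := by
    obtain ⟨n, hn⟩ := hreach k
    exact ⟨n, hn ▸ hrS⟩
  classical
  let m := Nat.find hex
  have hiS : par^[m] k ∈ S := Nat.find_spec hex
  have hm0 : m ≠ 0 := by
    intro h
    apply hkS
    have := hiS
    rwa [h, Function.iterate_zero_apply] at this
  have hmm : m - 1 < m := Nat.sub_lt (Nat.pos_of_ne_zero hm0) one_pos
  set j := par^[m-1] k with hjdef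
  have hjS : j ∉ S := Nat.find_min hex hmm
  have hjr : j ≠ r := fun e => hjS (e ▸ hrS)
  have hij : par^[m] k = par j := by
    have : m = (m - 1) + 1 := (Nat.succ_pred_eq_of_ne_zero hm0).symm
    rw [this, Function.iterate_succ_apply']
  have hnotS : ∀ t, t < m → par^[t] k ∉ S := fun t ht => Nat.find_min hex ht
  have hzchain : ∀ t, t ≤ m - 1 → z k ≤ z (par^[t] k) := by
    intro t
    induction t with
    | zero => intro _; simp
    | succ n ih =>
      intro hle
      have hn : n ≤ m - 1 := Nat.le_of_succ_le hle
      have hnr : par^[n] k ≠ r := by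
        intro e
        exact hnotS n (lt_of_le_of_lt hn hmm) (e ▸ hrS)
      calc z k ≤ z (par^[n] k) := ih hn
        _ ≤ z (par (par^[n] k)) := hmono _ hnr
        _ = z (par^[n+1] k) := by rw [Function.iterate_succ_apply']
  have hzk : z k ≤ z j := hzchain (m - 1) le_rfl
  have hy1 : z k ≤ y (par^[m] k) j := by
    rw [hy]
    rw [if_pos ⟨hjr, hij⟩]
    exact hzk
  calc z k ≤ y (par^[m] k) j := hy1
    _ ≤ ∑ j' ∈ Sᶜ, y (par^[m] k) j' :=
        Finset.single_le_sum (fun j' _ => hyn _ j') (Finset.mem_compl.mpr hjS)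
    _ ≤ ∑ i ∈ S, ∑ j' ∈ Sᶜ, y i j' :=
        Finset.single_le_sum
          (fun i _ => Finset.sum_nonneg fun j' _ => hyn i j') hiS
end

section
/- (Validity of probability-mass cut inequalities) Under the same encoding, for every vertex set S containing the root r, ∑_{(i,j): i∈S, j∉S} y_{ij} ≥ ∑_{i∉S} p_i, where p_i ≥ 0 is the probability the target is at vertex i and z_j ≥ ∑ of p over vertices visited no earlier than j including j. -/
open Finset in
/-- Validity of probability-mass cut inequalities (C2): with visit times `t`
(injective, parents visited before children) and
`z j = ∑_{w : t w ≥ t j} p w`, every cut around a set `S` containing the root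
carries `y`-value at least the probability mass outside `S`. -/
theorem stmt_15 {V : Type*} [Fintype V] [DecidableEq V]
    (r : V) (par : V → V) (hreach : ∀ v : V, ∃ n : ℕ, par^[n] v = r)
    (p : V → ℝ) (hp : ∀ v, 0 ≤ p v)
    (t : V → ℕ) (ht : Function.Injective t)
    (hpar : ∀ v, v ≠ r → t (par v) < t v)
    (z : V → ℝ) (hz : ∀ j, z j = ∑ w ∈ univ.filter (fun w => t j ≤ t w), p w)
    (y : V → V → ℝ)
    (hy : ∀ i j, y i j = if j ≠ r ∧ i = par j then z j else 0)
    (S : Finset V) (hrS : r ∈ S) :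
    ∑ i ∈ Sᶜ, p i ≤ ∑ i ∈ S, ∑ j ∈ Sᶜ, y i j := by
  rcases Sᶜ.eq_empty_or_nonempty with he | hne
  · simp [he]
  · obtain ⟨j₀, hj₀, hmin⟩ := Sᶜ.exists_min_image t hne
    have hj₀S : j₀ ∉ S := Finset.mem_compl.mp hj₀
    have hj₀r : j₀ ≠ r := fun h => hj₀S (h ▸ hrS)
    have hparS : par j₀ ∈ S := by
      by_contra hc
      have hle := hmin _ (Finset.mem_compl.mpr hc)
      exact absurd (hpar j₀ hj₀r) (not_lt.mpr hle)
    have hznn : ∀ j, 0 ≤ z j := fun j => by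
      rw [hz]; exact Finset.sum_nonneg fun w _ => hp w
    have hynn : ∀ i j, 0 ≤ y i j := fun i j => by
      rw [hy]; split
      · exact hznn j
      · exact le_refl 0
    have h1 : ∑ i ∈ Sᶜ, p i ≤ z j₀ := by
      rw [hz]
      apply Finset.sum_le_sum_of_subset_of_nonneg
      · intro w hw
        simp only [Finset.mem_filter, Finset.mem_univ, true_and]
        exact hmin w hw
      · intro w _ _; exact hp w
    have h2 : z j₀ ≤ ∑ i ∈ S, ∑ j ∈ Sᶜ, y i j := by
      calc z j₀ = y (par j₀) j₀ := by rw [hy]; simp [hj₀r]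
        _ ≤ ∑ j ∈ Sᶜ, y (par j₀) j :=
            Finset.single_le_sum (fun j _ => hynn (par j₀) j) hj₀
        _ ≤ ∑ i ∈ S, ∑ j ∈ Sᶜ, y i j :=
            Finset.single_le_sum
              (fun i _ => Finset.sum_nonneg fun j _ => hynn i j) hparS
    linarith
end
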